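/- Let τ : S → (D S)^A be an LMP. The ε-distance d*(s,t) = inf {ε ∈ [0,1] | s ∼_ε t} is a fixpoint of the functional Δ_LP, i.e., for all s₀, s₁ ∈ S, Δ_LP(d*)(s₀,s₁) = d*(s₀,s₁). -/

import Mathlib

/-!
Both inequalities come from comparing ε-bisimulations with the balls of `d*`.
If `R` is an ε-bisimulation with `ε ≤ 1`, every pair related by `R` is at `d*`-distance at most
`ε`, so `R(X)` lies in the `d*`-ball of radius `δ` around `X` for every `δ > ε`; this gives
`Δ_LP(d*) ≤ d*`. Conversely, the relation `d* < δ` is itself a δ-bisimulation, and whenever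
`Δ_LP(d*)(s₀, s₁) < δ ≤ 1` the pairs `(s₀, s₁)`, `(s₁, s₀)` satisfy the transfer condition for it
(the `d*`-ball of radius `δ` around `X` is exactly its image of `X`), so adding them still gives a
δ-bisimulation relating `s₀` and `s₁`.
-/

open scoped ENNReal Classical

noncomputable section

def mass {S : Type*} (φ : S → ℝ≥0∞) (X : Set S) : ℝ≥0∞ := ∑' x : X, φ x

def IsSubdist {S : Type*} (φ : S → ℝ≥0∞) : Prop := mass φ Set.univ ≤ 1

def IsPseudometric {S : Type*} (d : S → S → ℝ≥0∞) : Prop :=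
  (∀ x, d x x = 0) ∧ (∀ x y, d x y = d y x) ∧ (∀ x y z, d x z ≤ d x y + d y z)

def Bounded1 {S : Type*} (d : S → S → ℝ≥0∞) : Prop := ∀ x y, d x y ≤ 1

def eball {S : Type*} (d : S → S → ℝ≥0∞) (X : Set S) (ε : ℝ≥0∞) : Set S :=
  {y | ∃ x ∈ X, d x y < ε}

def LP {S : Type*} (d : S → S → ℝ≥0∞) (μ ν : S → ℝ≥0∞) : ℝ≥0∞ :=
  sInf {ε | ∀ X : Set S,
    mass μ X ≤ mass ν (eball d X ε) + ε ∧ mass ν X ≤ mass μ (eball d X ε) + ε}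

def relImg {S : Type*} (R : S → S → Prop) (X : Set S) : Set S := {y | ∃ x ∈ X, R x y}

def IsEpsBisim {S A : Type*} (τ : A → S → S → ℝ≥0∞) (ε : ℝ≥0∞) (R : S → S → Prop) : Prop :=
  Symmetric R ∧ ∀ s t, R s t → ∀ a : A, ∀ X : Set S,
    mass (τ a s) X ≤ mass (τ a t) (relImg R X) + ε

def EpsBisimilar {S A : Type*} (τ : A → S → S → ℝ≥0∞) (ε : ℝ≥0∞) (s t : S) : Prop :=
  ∃ R, IsEpsBisim τ ε R ∧ R s t

def dstar {S A : Type*} (τ : A → S → S → ℝ≥0∞) (s t : S) : ℝ≥0∞ :=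
  sInf {ε | ε ≤ 1 ∧ EpsBisimilar τ ε s t}

def DeltaLP {S A : Type*} (τ : A → S → S → ℝ≥0∞) (d : S → S → ℝ≥0∞) (s₀ s₁ : S) : ℝ≥0∞ :=
  ⨆ a : A, LP d (τ a s₀) (τ a s₁)

lemma mass_mono {S : Type*} (φ : S → ℝ≥0∞) {X Y : Set S} (h : X ⊆ Y) :
    mass φ X ≤ mass φ Y := by
  unfold mass
  rw [tsum_subtype, tsum_subtype]
  exact ENNReal.tsum_le_tsum fun x => Set.indicator_le_indicator_of_subset h (fun _ => zero_le) x

lemma relImg_mono {S : Type*} {R R' : S → S → Prop} (h : ∀ x y, R x y → R' x y) (X : Set S) :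
    relImg R X ⊆ relImg R' X := by
  rintro y ⟨x, hx, hxy⟩
  exact ⟨x, hx, h x y hxy⟩

lemma eball_mono {S : Type*} (d : S → S → ℝ≥0∞) (X : Set S) {ε δ : ℝ≥0∞} (h : ε ≤ δ) :
    eball d X ε ⊆ eball d X δ := by
  rintro y ⟨x, hx, hxy⟩
  exact ⟨x, hx, hxy.trans_le h⟩

lemma mass_le_of_LP_lt {S : Type*} {d : S → S → ℝ≥0∞} {μ ν : S → ℝ≥0∞} {δ : ℝ≥0∞}
    (h : LP d μ ν < δ) (X : Set S) :
    mass μ X ≤ mass ν (eball d X δ) + δ ∧ mass ν X ≤ mass μ (eball d X δ) + δ := by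
  obtain ⟨ε, hε, hεδ⟩ := sInf_lt_iff.mp h
  have step : ∀ φ : S → ℝ≥0∞, mass φ (eball d X ε) + ε ≤ mass φ (eball d X δ) + δ :=
    fun φ => add_le_add (mass_mono φ (eball_mono d X hεδ.le)) hεδ.le
  exact ⟨(hε X).1.trans (step ν), (hε X).2.trans (step μ)⟩

section Bisimulation

variable {S A : Type*} (τ : A → S → S → ℝ≥0∞)

lemma IsEpsBisim.mono_rel {ε : ℝ≥0∞} {R R' : S → S → Prop} (hR : IsEpsBisim τ ε R)
    (hR' : Symmetric R') (h : ∀ x y, R x y → R' x y)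
    (htransfer : ∀ s t, R' s t → ¬ R s t → ∀ a X, mass (τ a s) X ≤ mass (τ a t) (relImg R' X) + ε) :
    IsEpsBisim τ ε R' := by
  refine ⟨hR', fun s t hst a X => ?_⟩
  by_cases hRst : R s t
  · exact (hR.2 s t hRst a X).trans (add_le_add_left (mass_mono _ (relImg_mono h X)) ε)
  · exact htransfer s t hst hRst a X

lemma EpsBisimilar.symm {ε : ℝ≥0∞} {s t : S} (h : EpsBisimilar τ ε s t) :
    EpsBisimilar τ ε t s := by
  obtain ⟨R, hR, hst⟩ := h
  exact ⟨R, hR, hR.1 hst⟩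

lemma dstar_comm (s t : S) : dstar τ s t = dstar τ t s := by
  unfold dstar
  congr 1
  ext ε
  exact and_congr_right fun _ => ⟨EpsBisimilar.symm τ, EpsBisimilar.symm τ⟩

lemma epsBisimilar_one (hτ : ∀ a s, IsSubdist (τ a s)) (s t : S) : EpsBisimilar τ 1 s t := by
  refine ⟨fun _ _ => True, ⟨fun _ _ _ => trivial, fun x _ _ a X => ?_⟩, trivial⟩
  calc mass (τ a x) X ≤ mass (τ a x) Set.univ := mass_mono _ (Set.subset_univ X)
    _ ≤ 1 := hτ a x
    _ ≤ _ + 1 := le_add_self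

lemma dstar_le_one (hτ : ∀ a s, IsSubdist (τ a s)) (s t : S) : dstar τ s t ≤ 1 :=
  sInf_le ⟨le_rfl, epsBisimilar_one τ hτ s t⟩

lemma IsEpsBisim.dstar_le {ε : ℝ≥0∞} {R : S → S → Prop} (hR : IsEpsBisim τ ε R) (hε : ε ≤ 1)
    {s t : S} (hst : R s t) : dstar τ s t ≤ ε :=
  sInf_le ⟨hε, R, hR, hst⟩

lemma IsEpsBisim.LP_dstar_le {ε : ℝ≥0∞} {R : S → S → Prop} (hR : IsEpsBisim τ ε R)
    (hε : ε ≤ 1) {s t : S} (hst : R s t) (a : A) : LP (dstar τ) (τ a s) (τ a t) ≤ ε := by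
  refine le_of_forall_gt_imp_ge_of_dense fun δ hδ => sInf_le fun X => ?_
  have transfer : ∀ x y, R x y → mass (τ a x) X ≤ mass (τ a y) (eball (dstar τ) X δ) + δ := by
    intro x y hxy
    have himg : relImg R X ⊆ eball (dstar τ) X δ := by
      rintro z ⟨w, hw, hwz⟩
      exact ⟨w, hw, (hR.dstar_le τ hε hwz).trans_lt hδ⟩
    exact (hR.2 x y hxy a X).trans (add_le_add (mass_mono _ himg) hδ.le)
  exact ⟨transfer s t hst, transfer t s (hR.1 hst)⟩

lemma deltaLP_dstar_le_dstar (s t : S) : DeltaLP τ (dstar τ) s t ≤ dstar τ s t :=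
  iSup_le fun a => le_sInf fun _ ⟨hε, _, hR, hst⟩ => hR.LP_dstar_le τ hε hst a

lemma isEpsBisim_dstar_lt (δ : ℝ≥0∞) : IsEpsBisim τ δ (fun x y => dstar τ x y < δ) := by
  refine ⟨fun x y h => (dstar_comm τ y x).trans_lt h, fun x y hxy a X => ?_⟩
  obtain ⟨ε, ⟨hε, R, hR, hRxy⟩, hεδ⟩ := sInf_lt_iff.mp hxy
  have himg : relImg R X ⊆ relImg (fun x y => dstar τ x y < δ) X :=
    relImg_mono (fun _ _ h => (hR.dstar_le τ hε h).trans_lt hεδ) X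
  exact (hR.2 x y hRxy a X).trans (add_le_add (mass_mono _ himg) hεδ.le)

lemma epsBisimilar_of_deltaLP_dstar_lt {δ : ℝ≥0∞} {s₀ s₁ : S}
    (h : DeltaLP τ (dstar τ) s₀ s₁ < δ) : EpsBisimilar τ δ s₀ s₁ := by
  set R : S → S → Prop := fun x y => dstar τ x y < δ
  set R' : S → S → Prop := fun x y => R x y ∨ (x = s₀ ∧ y = s₁) ∨ (x = s₁ ∧ y = s₀)
  have hsymm : Symmetric R' := by
    rintro x y (hxy | ⟨rfl, rfl⟩ | ⟨rfl, rfl⟩)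
    · exact Or.inl ((isEpsBisim_dstar_lt τ δ).1 hxy)
    · exact Or.inr (Or.inr ⟨rfl, rfl⟩)
    · exact Or.inr (Or.inl ⟨rfl, rfl⟩)
  refine ⟨R', (isEpsBisim_dstar_lt τ δ).mono_rel τ hsymm (fun _ _ => Or.inl) ?_,
    Or.inr (Or.inl ⟨rfl, rfl⟩)⟩
  intro x y hxy _ a X
  have hLP := mass_le_of_LP_lt ((le_iSup (fun a => LP (dstar τ) (τ a s₀) (τ a s₁)) a).trans_lt h) X
  have himg : eball (dstar τ) X δ ⊆ relImg R' X := relImg_mono (fun _ _ => Or.inl) X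
  rcases hxy with hR | ⟨rfl, rfl⟩ | ⟨rfl, rfl⟩
  · exact ((isEpsBisim_dstar_lt τ δ).2 x y hR a X).trans (add_le_add_left (mass_mono _ himg) δ)
  · exact hLP.1.trans (add_le_add_left (mass_mono _ himg) δ)
  · exact hLP.2.trans (add_le_add_left (mass_mono _ himg) δ)

lemma dstar_le_deltaLP_dstar (hτ : ∀ a s, IsSubdist (τ a s)) (s t : S) :
    dstar τ s t ≤ DeltaLP τ (dstar τ) s t := by
  refine le_of_forall_gt_imp_ge_of_dense fun δ hδ => ?_
  rcases le_or_gt δ 1 with hδ1 | hδ1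
  · exact sInf_le ⟨hδ1, epsBisimilar_of_deltaLP_dstar_lt τ hδ⟩
  · exact (dstar_le_one τ hτ s t).trans hδ1.le

end Bisimulation

theorem stmt8 {S A : Type*} (τ : A → S → S → ℝ≥0∞) (hτ : ∀ a s, IsSubdist (τ a s)) :
    ∀ s₀ s₁ : S, DeltaLP τ (dstar τ) s₀ s₁ = dstar τ s₀ s₁ := fun s₀ s₁ =>
  le_antisymm (deltaLP_dstar_le_dstar τ s₀ s₁) (dstar_le_deltaLP_dstar τ hτ s₀ s₁)
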